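/- arXiv:math/0610371 — 2 statements merged into one kernel-verified Lean document; each statement's English description precedes it below -/
import Mathlib

section
/- Nondegeneracy of the Hessian on the complement of the fixed-point set: Let g be a linear isometry of ℝ^n and let W = range(1 − g) ⊆ ℝ^n (the image of the linear map id − g). Consider the symmetric bilinear form B on ℝ^n × ℝ^n given by B((α₁,β₁),(α₂,β₂)) = ⟨α₂ − g α₂, β₁⟩ + ⟨α₁ − g α₁, β₂⟩. Then the restriction of B to the subspace W × W is nondegenerate: if (α₁,β₁) ∈ W × W satisfies B((α₁,β₁),(α₂,β₂)) = 0 for all (α₂,β₂) ∈ W × W, then α₁ = 0 and β₁ = 0. -/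
/-!
For an isometry `g`, `‖x - g x‖² = 2 re ⟪x - g x, x⟫`, so `⟪x - g x, x⟫ = 0` forces `g x = x`.
Testing the form against `(0, α₁)` and `(β₁, 0)` gives `⟪α₁ - g α₁, α₁⟫ = 0` and
`⟪β₁ - g β₁, β₁⟫ = 0`, so `α₁` and `β₁` are fixed by `g`. But fixed vectors are orthogonal
to `range (1 - g)`, since `⟪y - g y, x⟫ = ⟪y, x⟫ - ⟪g y, g x⟫ = 0`, so a fixed vector of `W` is `0`.
-/

namespace LinearIsometry

open scoped InnerProductSpace

variable {𝕜 E : Type*} [RCLike 𝕜] [NormedAddCommGroup E] [InnerProductSpace 𝕜 E]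
  (f : E →ₗᵢ[𝕜] E)

theorem norm_sub_map_sq (x : E) : ‖x - f x‖ ^ 2 = 2 * RCLike.re ⟪x - f x, x⟫_𝕜 := by
  rw [@norm_sub_sq 𝕜, inner_sub_left, map_sub, inner_re_symm, f.norm_map,
    inner_self_eq_norm_sq]
  ring

theorem map_eq_of_re_inner_sub_map_self {x : E} (h : RCLike.re ⟪x - f x, x⟫_𝕜 = 0) :
    f x = x := by
  have : ‖x - f x‖ ^ 2 = 0 := by rw [norm_sub_map_sq, h, mul_zero]
  exact (sub_eq_zero.mp (by simpa using this)).symm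

theorem inner_sub_map_eq_zero_of_map_eq {x : E} (hx : f x = x) (y : E) :
    ⟪y - f y, x⟫_𝕜 = 0 := by
  rw [inner_sub_left, ← hx, f.inner_map_map, hx, sub_self]

theorem eq_zero_of_map_eq_of_mem_range {x : E} (hx : f x = x)
    (hrange : x ∈ LinearMap.range (LinearMap.id - f.toLinearMap)) : x = 0 := by
  obtain ⟨y, rfl⟩ := hrange
  exact inner_self_eq_zero.mp (f.inner_sub_map_eq_zero_of_map_eq hx y)

end LinearIsometry

open scoped RealInnerProductSpace

/-- Nondegeneracy of the Hessian of the equivariant phase on the complement of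
the fixed-point set: the bilinear form
`B((α₁,β₁),(α₂,β₂)) = ⟨α₂ - gα₂, β₁⟩ + ⟨α₁ - gα₁, β₂⟩` restricted to
`W × W`, where `W = range(1 - g)`, is nondegenerate. -/
theorem equivariant_phase_hessian_nondegenerate
    (n : ℕ) (g : EuclideanSpace ℝ (Fin n) ≃ₗᵢ[ℝ] EuclideanSpace ℝ (Fin n))
    (W : Submodule ℝ (EuclideanSpace ℝ (Fin n)))
    (hW : W = LinearMap.range
      ((LinearMap.id : EuclideanSpace ℝ (Fin n) →ₗ[ℝ] EuclideanSpace ℝ (Fin n)) -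
        (g.toLinearEquiv : EuclideanSpace ℝ (Fin n) →ₗ[ℝ] EuclideanSpace ℝ (Fin n)))) :
    ∀ α₁ β₁ : EuclideanSpace ℝ (Fin n), α₁ ∈ W → β₁ ∈ W →
      (∀ α₂ β₂ : EuclideanSpace ℝ (Fin n), α₂ ∈ W → β₂ ∈ W →
        ⟪α₂ - g α₂, β₁⟫ + ⟪α₁ - g α₁, β₂⟫ = 0) →
      α₁ = 0 ∧ β₁ = 0 := by
  intro α₁ β₁ hα₁ hβ₁ hB
  have hα₁_fixed : g α₁ = α₁ :=
    g.toLinearIsometry.map_eq_of_re_inner_sub_map_self (by simpa using hB 0 α₁ W.zero_mem hα₁)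
  have hβ₁_fixed : g β₁ = β₁ :=
    g.toLinearIsometry.map_eq_of_re_inner_sub_map_self (by simpa using hB β₁ 0 hβ₁ W.zero_mem)
  subst hW
  exact ⟨g.toLinearIsometry.eq_zero_of_map_eq_of_mem_range hα₁_fixed hα₁,
    g.toLinearIsometry.eq_zero_of_map_eq_of_mem_range hβ₁_fixed hβ₁⟩
end

section
/- Meromorphic continuation from an asymptotic expansion: Let ρ : ℝ → ℂ be continuous on [1,∞), let a ∈ ℝ and let (M_j)_{j∈ℕ} be complex numbers such that for every k ∈ ℕ there is C_k > 0 with ‖ρ(r) − Σ_{j<k} M_j r^{a-j}‖ ≤ C_k · r^{a-k} for all r ≥ 1. Then the function ζ(z) := ∫_{1}^{∞} r^{-z} ρ(r) dr, which converges and is analytic for Re z > a + 1, extends to a meromorphic function F on all of ℂ whose only possible poles are simple poles at the points z = a+1−j, j ∈ ℕ, with residue M_j at a+1−j; that is, there exists F : ℂ → ℂ with F(z) = ζ(z) for Re z > a+1, F complex differentiable on ℂ \ {a+1−j : j ∈ ℕ}, and for each j the function z ↦ F(z) − M_j/(z − (a+1−j)) extends holomorphically to a neighborhood of a+1−j. 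-/
open MeasureTheory Complex

/-!
Write `ρ = Σ_{j<k} M_j r^{a-j} + R_k` with `R_k = O(r^{a-k})`. Since
`∫_1^∞ r^{-z} r^{a-j} dr = 1 / (z - (a+1-j))`, for `Re z > a + 1` the integral equals
`∫_1^∞ r^{-z} R_k(r) dr + Σ_{j<k} M_j / (z - (a+1-j))`, and this expression is holomorphic
on `Re z > a + 1 - k` away from the poles (the Mellin transform of `R_k` cut off at `1`
converges there). Expressions of consecutive levels agree where both are defined, so
choosing at each `z` any admissible level gives a single continuation.
-/

open Set Filter Asymptotics Topology

noncomputable section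

section TailMellin

variable {g : ℝ → ℂ} {b : ℝ} {z : ℂ}

def tailMellin (g : ℝ → ℂ) (z : ℂ) : ℂ :=
  ∫ r in Ici (1 : ℝ), (r : ℂ) ^ (-z) * g r

lemma cpow_smul_indicator_Ici_one (g : ℝ → ℂ) (z : ℂ) :
    (fun t : ℝ => (t : ℂ) ^ (1 - z - 1) • (Ici 1).indicator g t) =
      (Ici 1).indicator (fun r : ℝ => (r : ℂ) ^ (-z) * g r) := by
  rw [sub_sub_cancel_left, ← indicator_smul]
  rfl

lemma tailMellin_eq_mellin (g : ℝ → ℂ) (z : ℂ) :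
    tailMellin g z = mellin ((Ici 1).indicator g) (1 - z) := by
  rw [mellin, cpow_smul_indicator_Ici_one, setIntegral_indicator measurableSet_Ici,
    inter_eq_right.mpr (Ici_subset_Ioi.mpr one_pos), tailMellin]

lemma integrableOn_Ici_one_iff_mellinConvergent :
    IntegrableOn (fun r : ℝ => (r : ℂ) ^ (-z) * g r) (Ici 1) ↔
      MellinConvergent ((Ici 1).indicator g) (1 - z) := by
  rw [MellinConvergent, cpow_smul_indicator_Ici_one, integrableOn_indicator_iff measurableSet_Ici,
    inter_eq_left.mpr (Ici_subset_Ioi.mpr one_pos)]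

lemma locallyIntegrableOn_indicator_Ici_one (hg : ContinuousOn g (Ici 1)) :
    LocallyIntegrableOn ((Ici 1).indicator g) (Ioi 0) := by
  rw [locallyIntegrableOn_iff isOpen_Ioi.isLocallyClosed]
  intro K _ hK
  rw [integrableOn_indicator_iff measurableSet_Ici]
  exact (hg.mono inter_subset_left).integrableOn_compact (hK.inter_left isClosed_Ici)

lemma indicator_Ici_one_isBigO_nhdsGT_zero (g : ℝ → ℂ) (c : ℝ) :
    (Ici 1).indicator g =O[𝓝[>] 0] (· ^ c) := by
  have hvanish : (Ici 1).indicator g =ᶠ[𝓝[>] 0] 0 := by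
    filter_upwards [Ioo_mem_nhdsGT one_pos] with t ht
    exact indicator_of_notMem (not_le.mpr ht.2) g
  exact hvanish.trans_isBigO (isBigO_zero _ _)

lemma Asymptotics.IsBigO.indicator_Ici_one {f : ℝ → ℝ} (hg : g =O[atTop] f) :
    (Ici 1).indicator g =O[atTop] f := by
  refine EventuallyEq.trans_isBigO ?_ hg
  filter_upwards [eventually_ge_atTop 1] with r hr
  exact indicator_of_mem (mem_Ici.mpr hr) g

theorem mellinConvergent_indicator_Ici_one (hg : ContinuousOn g (Ici 1))
    (hb : g =O[atTop] (· ^ b)) (hz : b + 1 < z.re) :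
    MellinConvergent ((Ici 1).indicator g) (1 - z) :=
  mellinConvergent_of_isBigO_rpow (a := -b) (locallyIntegrableOn_indicator_Ici_one hg)
    (by simpa only [neg_neg] using hb.indicator_Ici_one)
    (by simp only [sub_re, one_re]; linarith)
    (indicator_Ici_one_isBigO_nhdsGT_zero g _) (sub_one_lt _)

theorem integrableOn_cpow_neg_mul (hg : ContinuousOn g (Ici 1)) (hb : g =O[atTop] (· ^ b))
    (hz : b + 1 < z.re) : IntegrableOn (fun r : ℝ => (r : ℂ) ^ (-z) * g r) (Ici 1) :=
  integrableOn_Ici_one_iff_mellinConvergent.mpr (mellinConvergent_indicator_Ici_one hg hb hz)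

theorem differentiableAt_tailMellin (hg : ContinuousOn g (Ici 1)) (hb : g =O[atTop] (· ^ b))
    (hz : b + 1 < z.re) : DifferentiableAt ℂ (tailMellin g) z := by
  have hmellin : DifferentiableAt ℂ (mellin ((Ici 1).indicator g)) (1 - z) :=
    mellin_differentiableAt_of_isBigO_rpow (a := -b) (locallyIntegrableOn_indicator_Ici_one hg)
      (by simpa only [neg_neg] using hb.indicator_Ici_one)
      (by simp only [sub_re, one_re]; linarith)
      (indicator_Ici_one_isBigO_nhdsGT_zero g _) (sub_one_lt _)
  rw [funext (tailMellin_eq_mellin g)]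
  exact hmellin.comp z ((differentiableAt_const 1).sub differentiableAt_id)

lemma cpow_neg_mul_cpow_eqOn (z s : ℂ) :
    EqOn (fun r : ℝ => (r : ℂ) ^ (-z) * (r : ℂ) ^ s) (fun r : ℝ => (r : ℂ) ^ (s - z)) (Ici 1) :=
  fun r hr => by
    simp only [sub_eq_neg_add, cpow_add _ _ (ofReal_ne_zero.mpr (zero_lt_one.trans_le hr).ne')]

lemma integrableOn_cpow_neg_mul_cpow {s : ℂ} (hs : s.re + 1 < z.re) :
    IntegrableOn (fun r : ℝ => (r : ℂ) ^ (-z) * (r : ℂ) ^ s) (Ici 1) := by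
  refine IntegrableOn.congr_fun ?_ (cpow_neg_mul_cpow_eqOn z s).symm measurableSet_Ici
  rw [integrableOn_Ici_iff_integrableOn_Ioi]
  exact integrableOn_Ioi_cpow_of_lt (by simp only [sub_re]; linarith) one_pos

lemma tailMellin_cpow {s : ℂ} (hs : s.re + 1 < z.re) :
    tailMellin (fun r : ℝ => (r : ℂ) ^ s) z = 1 / (z - (s + 1)) := by
  rw [tailMellin, setIntegral_congr_fun measurableSet_Ici (cpow_neg_mul_cpow_eqOn z s),
    integral_Ici_eq_integral_Ioi,
    integral_Ioi_cpow_of_lt (by simp only [sub_re]; linarith) one_pos, ofReal_one, one_cpow,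
    ← neg_div_neg_eq, neg_neg, neg_add', neg_sub, sub_sub]

end TailMellin

section Expansion

variable (ρ : ℝ → ℂ) (a : ℝ) (M : ℕ → ℂ)

def expansionRemainder (k : ℕ) (r : ℝ) : ℂ :=
  ρ r - ∑ j ∈ Finset.range k, M j * (r : ℂ) ^ ((a - j : ℝ) : ℂ)

def HasAsymptoticExpansion : Prop :=
  ∀ k : ℕ, expansionRemainder ρ a M k =O[atTop] (· ^ (a - k))

def poleSum (k : ℕ) (z : ℂ) : ℂ :=
  ∑ j ∈ Finset.range k, M j / (z - ((a : ℂ) + 1 - j))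

def truncatedContinuation (k : ℕ) (z : ℂ) : ℂ :=
  tailMellin (expansionRemainder ρ a M k) z + poleSum a M k z

def expansionContinuation (z : ℂ) : ℂ :=
  truncatedContinuation ρ a M ⌈a + 2 - z.re⌉₊ z

variable {ρ a M}

lemma expansionRemainder_zero : expansionRemainder ρ a M 0 = ρ := by
  ext r
  simp [expansionRemainder]

lemma expansionRemainder_eq_succ_add (k : ℕ) (r : ℝ) :
    expansionRemainder ρ a M k r =
      expansionRemainder ρ a M (k + 1) r + M k * (r : ℂ) ^ ((a - k : ℝ) : ℂ) := by
  simp only [expansionRemainder, Finset.sum_range_succ]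
  ring

lemma continuousOn_expansionRemainder (hρ : ContinuousOn ρ (Ici 1)) (k : ℕ) :
    ContinuousOn (expansionRemainder ρ a M k) (Ici 1) := by
  refine hρ.sub (continuousOn_finsetSum _ fun j _ => continuousOn_const.mul fun r hr => ?_)
  exact (continuousAt_ofReal_cpow_const r _
    (Or.inr (zero_lt_one.trans_le hr).ne')).continuousWithinAt

lemma differentiableAt_poleSum {k : ℕ} {z : ℂ} (hz : ∀ j < k, z ≠ (a : ℂ) + 1 - j) :
    DifferentiableAt ℂ (poleSum a M k) z := by
  refine DifferentiableAt.fun_sum fun j hj => ?_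
  exact (differentiableAt_const _).div (differentiableAt_id.sub (differentiableAt_const _))
    (sub_ne_zero.mpr (hz j (Finset.mem_range.mp hj)))

lemma hasAsymptoticExpansion_of_norm_le
    (h : ∀ k : ℕ, ∃ C : ℝ, ∀ r : ℝ, 1 ≤ r → ‖expansionRemainder ρ a M k r‖ ≤ C * r ^ (a - k)) :
    HasAsymptoticExpansion ρ a M := fun k => by
  obtain ⟨C, hC⟩ := h k
  refine IsBigO.of_bound C ?_
  filter_upwards [eventually_ge_atTop 1] with r hr
  rw [Real.norm_of_nonneg (Real.rpow_nonneg (zero_le_one.trans hr) _)]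
  exact hC r hr

variable (hcont : ContinuousOn ρ (Ici 1)) (hρ : HasAsymptoticExpansion ρ a M)
include hcont hρ

lemma integrableOn_cpow_neg_mul_expansionRemainder {k : ℕ} {z : ℂ} (hz : a + 1 - k < z.re) :
    IntegrableOn (fun r : ℝ => (r : ℂ) ^ (-z) * expansionRemainder ρ a M k r) (Ici 1) :=
  integrableOn_cpow_neg_mul (continuousOn_expansionRemainder hcont k) (hρ k) (by linarith)

lemma differentiableAt_truncatedContinuation {k : ℕ} {z : ℂ} (hz : a + 1 - k < z.re)
    (hpole : ∀ j < k, z ≠ (a : ℂ) + 1 - j) :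
    DifferentiableAt ℂ (truncatedContinuation ρ a M k) z :=
  (differentiableAt_tailMellin (continuousOn_expansionRemainder hcont k) (hρ k)
    (by linarith)).add (differentiableAt_poleSum hpole)

lemma truncatedContinuation_succ {k : ℕ} {z : ℂ} (hz : a + 1 - k < z.re) :
    truncatedContinuation ρ a M (k + 1) z = truncatedContinuation ρ a M k z := by
  have hpow : ((a - k : ℝ) : ℂ).re + 1 < z.re := by simp only [ofReal_re]; linarith
  have hsplit : tailMellin (expansionRemainder ρ a M k) z =
      tailMellin (expansionRemainder ρ a M (k + 1)) z + M k / (z - ((a : ℂ) + 1 - k)) := by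
    rw [tailMellin, setIntegral_congr_fun measurableSet_Ici
      (fun r _ => by rw [expansionRemainder_eq_succ_add, mul_add, mul_left_comm]),
      integral_add (integrableOn_cpow_neg_mul_expansionRemainder hcont hρ (by push_cast; linarith))
        ((integrableOn_cpow_neg_mul_cpow hpow).const_mul _),
      integral_const_mul, ← tailMellin, ← tailMellin, tailMellin_cpow hpow]
    push_cast
    ring_nf
  simp only [truncatedContinuation, poleSum, Finset.sum_range_succ, hsplit]
  ring

lemma truncatedContinuation_eq_of_le {m k : ℕ} (hmk : m ≤ k) {z : ℂ} (hz : a + 1 - m < z.re) :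
    truncatedContinuation ρ a M k z = truncatedContinuation ρ a M m z := by
  induction k, hmk using Nat.le_induction with
  | base => rfl
  | succ n hmn ih =>
    have hn : a + 1 - n < z.re := by
      have : (m : ℝ) ≤ n := by exact_mod_cast hmn
      linarith
    rw [truncatedContinuation_succ hcont hρ hn, ih]

lemma expansionContinuation_eq {k : ℕ} {z : ℂ} (hz : a + 1 - k < z.re) :
    expansionContinuation ρ a M z = truncatedContinuation ρ a M k z := by
  have hN : a + 1 - ⌈a + 2 - z.re⌉₊ < z.re := by linarith [Nat.le_ceil (a + 2 - z.re)]
  obtain hle | hle := le_total k ⌈a + 2 - z.re⌉₊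
  · exact truncatedContinuation_eq_of_le hcont hρ hle hz
  · exact (truncatedContinuation_eq_of_le hcont hρ hle hN).symm

lemma expansionContinuation_eq_tailMellin {z : ℂ} (hz : a + 1 < z.re) :
    expansionContinuation ρ a M z = tailMellin ρ z := by
  rw [expansionContinuation_eq hcont hρ (k := 0) (by simpa using hz), truncatedContinuation,
    expansionRemainder_zero, poleSum, Finset.sum_range_zero, add_zero]

lemma differentiableOn_expansionContinuation :
    DifferentiableOn ℂ (expansionContinuation ρ a M) {z : ℂ | ∀ j : ℕ, z ≠ (a : ℂ) + 1 - j} := by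
  intro z hz
  set k := ⌈a + 2 - z.re⌉₊
  have hk : a + 1 - k < z.re := by linarith [Nat.le_ceil (a + 2 - z.re)]
  have hagree : expansionContinuation ρ a M =ᶠ[𝓝 z] truncatedContinuation ρ a M k :=
    eventually_of_mem ((isOpen_lt continuous_const continuous_re).mem_nhds hk)
      fun w hw => expansionContinuation_eq hcont hρ hw
  exact ((differentiableAt_truncatedContinuation hcont hρ hk fun j _ => hz j).congr_of_eventuallyEq
    hagree).differentiableWithinAt

lemma exists_differentiableOn_eqOn_expansionContinuation_sub_pole (j : ℕ) :
    ∃ G : ℂ → ℂ, DifferentiableOn ℂ G (Metric.ball ((a : ℂ) + 1 - j) 1) ∧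
      EqOn G (fun z => expansionContinuation ρ a M z - M j / (z - ((a : ℂ) + 1 - j)))
        (Metric.ball ((a : ℂ) + 1 - j) 1) := by
  have hstrip : ∀ z ∈ Metric.ball ((a : ℂ) + 1 - j) 1, a - j < z.re ∧ z.re < a + 2 - j := by
    intro z hz
    have := (abs_re_le_norm _).trans_lt (mem_ball_iff_norm.mp hz)
    simp only [sub_re, add_re, ofReal_re, one_re, natCast_re, abs_lt] at this
    constructor <;> linarith
  refine ⟨fun z => tailMellin (expansionRemainder ρ a M (j + 1)) z + poleSum a M j z,
    fun z hz => ?_, fun z hz => ?_⟩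
  · obtain ⟨hlow, hhigh⟩ := hstrip z hz
    refine DifferentiableAt.differentiableWithinAt <|
      DifferentiableAt.add ?_ (differentiableAt_poleSum fun i hi => ?_)
    · exact differentiableAt_tailMellin (continuousOn_expansionRemainder hcont _) (hρ _)
        (by push_cast; linarith)
    · rintro rfl
      have : (i : ℝ) + 1 ≤ j := by exact_mod_cast hi
      simp only [sub_re, add_re, ofReal_re, one_re, natCast_re] at hhigh
      linarith
  · dsimp only
    rw [expansionContinuation_eq hcont hρ (k := j + 1) (by push_cast; linarith [(hstrip z hz).1]),
      truncatedContinuation, poleSum, poleSum, Finset.sum_range_succ]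
    ring

end Expansion

end

/-- Meromorphic continuation from an asymptotic expansion: if `ρ` admits an
asymptotic expansion `ρ(r) ∼ Σ M_j r^{a-j}` as `r → ∞`, then
`ζ(z) = ∫_{1}^{∞} r^{-z} ρ(r) dr` extends from the half-plane `Re z > a+1` to
a meromorphic function on `ℂ` with at most simple poles at `z = a+1-j`, `j ∈ ℕ`,
with residue `M_j` at `a+1-j`. -/
theorem meromorphic_continuation_from_expansion
    (ρ : ℝ → ℂ) (hcont : ContinuousOn ρ (Set.Ici 1))
    (a : ℝ) (M : ℕ → ℂ)
    (hexp : ∀ k : ℕ, ∃ C > (0:ℝ), ∀ r : ℝ, 1 ≤ r →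
      ‖ρ r - ∑ j ∈ Finset.range k, M j * (r : ℂ) ^ ((a - j : ℝ) : ℂ)‖
        ≤ C * r ^ (a - k)) :
    ∃ F : ℂ → ℂ,
      (∀ z : ℂ, a + 1 < z.re →
        IntegrableOn (fun r : ℝ => (r : ℂ) ^ (-z) * ρ r) (Set.Ici 1) ∧
        F z = ∫ r in Set.Ici (1:ℝ), (r : ℂ) ^ (-z) * ρ r) ∧
      DifferentiableOn ℂ F {z : ℂ | ∀ j : ℕ, z ≠ (a : ℂ) + 1 - j} ∧
      (∀ j : ℕ, ∃ G : ℂ → ℂ, ∃ ε > (0:ℝ),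
        DifferentiableOn ℂ G (Metric.ball ((a : ℂ) + 1 - j) ε) ∧
        ∀ z ∈ Metric.ball ((a : ℂ) + 1 - j) ε, z ≠ (a : ℂ) + 1 - j →
          G z = F z - M j / (z - ((a : ℂ) + 1 - j))) := by
  have hρ : HasAsymptoticExpansion ρ a M :=
    hasAsymptoticExpansion_of_norm_le fun k => (hexp k).imp fun _ hC => hC.2
  refine ⟨expansionContinuation ρ a M, fun z hz => ⟨?_, ?_⟩,
    differentiableOn_expansionContinuation hcont hρ, fun j => ?_⟩
  · simpa only [expansionRemainder_zero] using
      integrableOn_cpow_neg_mul_expansionRemainder hcont hρ (k := 0) (by simpa using hz)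
  · exact expansionContinuation_eq_tailMellin hcont hρ hz
  · obtain ⟨G, hG, hGeq⟩ :=
      exists_differentiableOn_eqOn_expansionContinuation_sub_pole hcont hρ j
    exact ⟨G, 1, one_pos, hG, fun z hz _ => hGeq hz⟩
end
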